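/- arXiv:2404.04486 — 3 statements merged into one kernel-verified Lean document; each statement's English description precedes it below -/
import Mathlib

section
/- Fix exponents p₁,...,pₙ > 0 and finite nonempty sets S₁,...,Sₙ ⊆ ℤ. Suppose that for all nonnegative functions f_j : ℤ → [0,∞) supported on S_j one has Σ_{z ∈ ℤ} max_{x₁+⋯+xₙ=z} ∏_j f_j(x_j)^{p_j} ≥ ∏_j (Σ_x f_j(x))^{p_j}. Then for every d ≥ 1 and all nonnegative functions f_j : ℤ^d → [0,∞) supported on S_j^d, the same inequality holds with sums and maxima over ℤ^d. -/
lemma splitNonempty {n : ℕ} (hn : 1 ≤ n) {M : Type*} [AddCommMonoid M] (z : M) :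
    Nonempty {x : Fin n → M // ∑ j, x j = z} := by
  refine ⟨⟨fun j => if j = ⟨0, hn⟩ then z else 0, ?_⟩⟩
  simp

lemma ciSup_zero {ι : Sort*} [Nonempty ι] {f : ι → ℝ} (h : ∀ i, f i = 0) : ⨆ i, f i = 0 := by
  have : f = fun _ => 0 := funext h
  rw [this]; exact ciSup_const

lemma snoc_sum {n d : ℕ} (a : Fin n → Fin d → ℤ) (b : Fin n → ℤ) :
    ∑ j, (Fin.snoc (a j) (b j) : Fin (d+1) → ℤ) = Fin.snoc (∑ j, a j) (∑ j, b j) := by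
  funext i
  induction i using Fin.lastCases with
  | last => simp [Finset.sum_apply]
  | cast i => simp [Finset.sum_apply]

lemma snoc_mem_piFinset {d : ℕ} (y : Fin d → ℤ) (t : ℤ) (S : Finset ℤ) :
    (Fin.snoc y t ∈ Fintype.piFinset (fun _ : Fin (d+1) => S)) ↔
      y ∈ Fintype.piFinset (fun _ : Fin d => S) ∧ t ∈ S := by
  simp only [Fintype.mem_piFinset]
  constructor
  · intro h
    exact ⟨fun i => by simpa using h i.castSucc, by simpa using h (Fin.last d)⟩
  · intro ⟨h1, h2⟩ i
    induction i using Fin.lastCases with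
    | last => simpa
    | cast i => simpa using h1 i

lemma snoc_inj {d : ℕ} :
    Function.Injective (fun pr : (Fin d → ℤ) × ℤ => (Fin.snoc pr.1 pr.2 : Fin (d+1) → ℤ)) := by
  intro a b h
  have h1 : a.1 = b.1 := by
    funext i
    simpa using congrFun h (Fin.castSucc i)
  have h2 : a.2 = b.2 := by simpa using congrFun h (Fin.last d)
  exact Prod.ext h1 h2

section
variable {n d : ℕ} (p : Fin n → ℝ) (S : Fin n → Finset ℤ) (f : Fin n → (Fin d → ℤ) → ℝ)

lemma prodBound (hp : ∀ j, 0 < p j) (hf0 : ∀ j x, 0 ≤ f j x)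
    (hfs : ∀ j, ∀ x : Fin d → ℤ, x ∉ Fintype.piFinset (fun _ => S j) → f j x = 0)
    (x : Fin n → (Fin d → ℤ)) :
    ∏ j, f j (x j) ^ p j ≤
      ∑ y ∈ Fintype.piFinset (fun j => Fintype.piFinset fun _ : Fin d => S j),
        ∏ j, f j (y j) ^ p j := by
  have hnn : ∀ y : Fin n → Fin d → ℤ, 0 ≤ ∏ j, f j (y j) ^ p j := fun y =>
    Finset.prod_nonneg fun j _ => Real.rpow_nonneg (hf0 j _) _
  by_cases h : ∀ j, x j ∈ Fintype.piFinset (fun _ : Fin d => S j)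
  · exact Finset.single_le_sum (fun y _ => hnn y) (Fintype.mem_piFinset.2 h)
  · push_neg at h
    obtain ⟨j, hj⟩ := h
    calc ∏ j, f j (x j) ^ p j = 0 := by
          refine Finset.prod_eq_zero (Finset.mem_univ j) ?_
          rw [hfs j _ hj, Real.zero_rpow (hp j).ne']
      _ ≤ _ := Finset.sum_nonneg fun y _ => hnn y

lemma supVanish (hn : 1 ≤ n) (hp : ∀ j, 0 < p j)
    (hfs : ∀ j, ∀ x : Fin d → ℤ, x ∉ Fintype.piFinset (fun _ => S j) → f j x = 0)
    (z : Fin d → ℤ)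
    (hz : z ∉ Finset.image (fun x : Fin n → Fin d → ℤ => ∑ j, x j)
      (Fintype.piFinset fun j => Fintype.piFinset fun _ : Fin d => S j)) :
    ⨆ x : {x : Fin n → Fin d → ℤ // ∑ j, x j = z}, ∏ j, f j (x.1 j) ^ p j = 0 := by
  have := splitNonempty hn z
  refine ciSup_zero fun x => ?_
  by_cases h : ∀ j, x.1 j ∈ Fintype.piFinset (fun _ : Fin d => S j)
  · exact absurd (Finset.mem_image.2 ⟨x.1, Fintype.mem_piFinset.2 h, x.2⟩) hz
  · push_neg at h
    obtain ⟨j, hj⟩ := h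
    refine Finset.prod_eq_zero (Finset.mem_univ j) ?_
    rw [hfs j _ hj, Real.zero_rpow (hp j).ne']

end

theorem key (n : ℕ) (hn : 1 ≤ n) (p : Fin n → ℝ) (hp : ∀ j, 0 < p j)
    (S : Fin n → Finset ℤ) (hS : ∀ j, (S j).Nonempty)
    (h1 : ∀ f : Fin n → ℤ → ℝ, (∀ j x, 0 ≤ f j x) → (∀ j, ∀ x ∉ S j, f j x = 0) →
      ∑' z : ℤ, ⨆ x : {x : Fin n → ℤ // ∑ j, x j = z}, ∏ j, (f j (x.1 j)) ^ (p j)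
        ≥ ∏ j, (∑ x ∈ S j, f j x) ^ (p j)) :
    ∀ (d : ℕ) (f : Fin n → (Fin d → ℤ) → ℝ), (∀ j x, 0 ≤ f j x) →
      (∀ j, ∀ x : Fin d → ℤ, x ∉ Fintype.piFinset (fun _ => S j) → f j x = 0) →
      ∑' z : Fin d → ℤ,
          ⨆ x : {x : Fin n → Fin d → ℤ // ∑ j, x j = z}, ∏ j, (f j (x.1 j)) ^ (p j)
        ≥ ∏ j, (∑ x ∈ Fintype.piFinset (fun _ => S j), f j x) ^ (p j) := by
  intro d
  induction d with
  | zero =>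
    intro f hf0 hfs
    have h0 : ∀ (x : Fin 0 → ℤ), x = default := fun x => Subsingleton.elim _ _
    rw [tsum_eq_single (default : Fin 0 → ℤ) (fun b hb => absurd (h0 b) hb)]
    have := splitNonempty hn (default : Fin 0 → ℤ)
    have hterm : ∀ x : {x : Fin n → Fin 0 → ℤ // ∑ j, x j = default},
        ∏ j, f j (x.1 j) ^ p j = ∏ j, f j default ^ p j := fun x =>
      Finset.prod_congr rfl fun j _ => by rw [h0 (x.1 j)]
    have hsup : (⨆ x : {x : Fin n → Fin 0 → ℤ // ∑ j, x j = default},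
        ∏ j, f j (x.1 j) ^ p j) = ∏ j, f j default ^ p j := by
      calc (⨆ x : {x : Fin n → Fin 0 → ℤ // ∑ j, x j = default}, ∏ j, f j (x.1 j) ^ p j)
          = ⨆ _ : {x : Fin n → Fin 0 → ℤ // ∑ j, x j = default}, ∏ j, f j default ^ p j :=
            iSup_congr hterm
        _ = _ := ciSup_const
    rw [hsup]
    have hpi : ∀ j, Fintype.piFinset (fun _ : Fin 0 => S j) = {default} := by
      intro j
      ext x
      simp only [Fintype.mem_piFinset, Finset.mem_singleton]
      constructor
      · intro _; exact h0 x
      · intro _ i; exact i.elim0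
    refine ge_of_eq (Finset.prod_congr rfl fun j _ => ?_)
    rw [hpi j, Finset.sum_singleton]
  | succ d ih =>
    intro f hf0 hfs
    -- notation
    set Sd : Fin n → Finset (Fin d → ℤ) := fun j => Fintype.piFinset fun _ : Fin d => S j with hSd
    set T' : Finset (Fin d → ℤ) :=
      Finset.image (fun x : Fin n → Fin d → ℤ => ∑ j, x j) (Fintype.piFinset Sd) with hT'
    set U : Finset ℤ :=
      Finset.image (fun s : Fin n → ℤ => ∑ j, s j) (Fintype.piFinset S) with hU
    set C : ℝ := ∑ y ∈ Fintype.piFinset (fun j => Fintype.piFinset fun _ : Fin (d+1) => S j),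
      ∏ j, f j (y j) ^ p j with hCdef
    have hC : ∀ x : Fin n → Fin (d+1) → ℤ, ∏ j, f j (x j) ^ p j ≤ C :=
      prodBound p S f hp hf0 hfs
    have hnn : ∀ x : Fin n → Fin (d+1) → ℤ, 0 ≤ ∏ j, f j (x j) ^ p j := fun x =>
      Finset.prod_nonneg fun j _ => Real.rpow_nonneg (hf0 j _) _
    -- slice support
    have hslice : ∀ (j) (t : ℤ) (y : Fin d → ℤ), y ∉ Sd j → f j (Fin.snoc y t) = 0 := by
      intro j t y hy
      refine hfs j _ fun hmem => hy ?_
      exact ((snoc_mem_piFinset y t (S j)).1 hmem).1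
    have hslice' : ∀ (j) (t : ℤ), t ∉ S j → ∀ y : Fin d → ℤ, f j (Fin.snoc y t) = 0 := by
      intro j t ht y
      refine hfs j _ fun hmem => ht ?_
      exact ((snoc_mem_piFinset y t (S j)).1 hmem).2
    -- the marginal functions
    set g : Fin n → ℤ → ℝ := fun j t => ∑ y ∈ Sd j, f j (Fin.snoc y t) with hgdef
    have hg0 : ∀ j t, 0 ≤ g j t := fun j t => Finset.sum_nonneg fun y _ => hf0 j _
    have hgs : ∀ j, ∀ t ∉ S j, g j t = 0 := fun j t ht =>
      Finset.sum_eq_zero fun y _ => hslice' j t ht y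
    -- inner sup
    set inn : (Fin n → ℤ) → (Fin d → ℤ) → ℝ := fun s z' =>
      ⨆ x' : {x' : Fin n → Fin d → ℤ // ∑ j, x' j = z'},
        ∏ j, f j (Fin.snoc (x'.1 j) (s j)) ^ p j with hinn
    have hinnVanish : ∀ s z', z' ∉ T' → inn s z' = 0 := by
      intro s z' hz'
      have := splitNonempty hn z'
      refine ciSup_zero fun x' => ?_
      by_cases h : ∀ j, x'.1 j ∈ Sd j
      · exact absurd (Finset.mem_image.2 ⟨x'.1, Fintype.mem_piFinset.2 h, x'.2⟩) hz'
      · push_neg at h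
        obtain ⟨j, hj⟩ := h
        refine Finset.prod_eq_zero (Finset.mem_univ j) ?_
        rw [hslice j (s j) _ hj, Real.zero_rpow (hp j).ne']
    -- D
    set D : (Fin n → ℤ) → ℝ := fun s => ∑ z' ∈ T', inn s z' with hDdef
    have hD : ∀ s : Fin n → ℤ, ∏ j, g j (s j) ^ p j ≤ D s := by
      intro s
      have happ := ih (fun j y => f j (Fin.snoc y (s j))) (fun j y => hf0 j _)
        (fun j y hy => hslice j (s j) y hy)
      have htsum : ∑' z' : Fin d → ℤ, inn s z' = D s :=
        tsum_eq_sum fun z' hz' => hinnVanish s z' hz'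
      calc ∏ j, g j (s j) ^ p j = ∏ j, (∑ y ∈ Sd j, f j (Fin.snoc y (s j))) ^ p j := rfl
        _ ≤ ∑' z' : Fin d → ℤ, inn s z' := happ
        _ = D s := htsum
    have hDle : ∀ s, D s ≤ (T'.card : ℝ) * C := by
      intro s
      have hub : ∀ z' ∈ T', inn s z' ≤ C := by
        intro z' _
        have := splitNonempty hn z'
        exact ciSup_le fun x' => hC fun j => Fin.snoc (x'.1 j) (s j)
      calc D s ≤ ∑ _z' ∈ T', C := Finset.sum_le_sum hub
        _ = (T'.card : ℝ) * C := by rw [Finset.sum_const, nsmul_eq_mul]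
    -- big sup over splittings of z in dimension d+1
    set G : (Fin (d+1) → ℤ) → ℝ := fun z =>
      ⨆ x : {x : Fin n → Fin (d+1) → ℤ // ∑ j, x j = z}, ∏ j, f j (x.1 j) ^ p j with hGdef
    set Tbig : Finset (Fin (d+1) → ℤ) :=
      Finset.image (fun pr : (Fin d → ℤ) × ℤ => (Fin.snoc pr.1 pr.2 : Fin (d+1) → ℤ))
        (T' ×ˢ U) with hTbig
    have hGvanish : ∀ z ∉ Tbig, G z = 0 := by
      intro z hz
      have := splitNonempty hn z
      refine ciSup_zero fun x => ?_
      by_cases h : ∀ j, x.1 j ∈ Fintype.piFinset (fun _ : Fin (d+1) => S j)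
      · exfalso
        apply hz
        have hx : ∀ j, x.1 j = Fin.snoc (Fin.init (x.1 j)) (x.1 j (Fin.last d)) := fun j =>
          (Fin.snoc_init_self (x.1 j)).symm
        have hzeq : z = Fin.snoc (∑ j, Fin.init (x.1 j)) (∑ j, x.1 j (Fin.last d)) := by
          rw [← snoc_sum]
          conv_lhs => rw [← x.2]
          exact Finset.sum_congr rfl fun j _ => hx j
        refine Finset.mem_image.2 ⟨(∑ j, Fin.init (x.1 j), ∑ j, x.1 j (Fin.last d)),
          Finset.mem_product.2 ⟨?_, ?_⟩, hzeq.symm⟩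
        · refine Finset.mem_image.2 ⟨fun j => Fin.init (x.1 j), Fintype.mem_piFinset.2 fun j => ?_, rfl⟩
          refine Fintype.mem_piFinset.2 fun i => ?_
          simpa [Fin.init] using Fintype.mem_piFinset.1 (h j) i.castSucc
        · refine Finset.mem_image.2 ⟨fun j => x.1 j (Fin.last d), Fintype.mem_piFinset.2 fun j => ?_, rfl⟩
          exact Fintype.mem_piFinset.1 (h j) (Fin.last d)
      · push_neg at h
        obtain ⟨j, hj⟩ := h
        refine Finset.prod_eq_zero (Finset.mem_univ j) ?_
        rw [hfs j _ hj, Real.zero_rpow (hp j).ne']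
    -- main chain
    have step1 : ∑' z : Fin (d+1) → ℤ, G z = ∑ z ∈ Tbig, G z :=
      tsum_eq_sum fun z hz => hGvanish z hz
    have step2 : ∑ z ∈ Tbig, G z = ∑ t ∈ U, ∑ z' ∈ T', G (Fin.snoc z' t) := by
      rw [hTbig, Finset.sum_image (fun a _ b _ h => snoc_inj h), Finset.sum_product]
      exact Finset.sum_comm
    have step3 : ∀ t : ℤ, (⨆ s : {s : Fin n → ℤ // ∑ j, s j = t}, D s.1) ≤
        ∑ z' ∈ T', G (Fin.snoc z' t) := by
      intro t
      have := splitNonempty hn t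
      refine ciSup_le fun s => ?_
      refine Finset.sum_le_sum fun z' _ => ?_
      have := splitNonempty hn z'
      refine ciSup_le fun x' => ?_
      have hmem : ∑ j, (Fin.snoc (x'.1 j) (s.1 j) : Fin (d+1) → ℤ) = Fin.snoc z' t := by
        rw [snoc_sum, x'.2, s.2]
      have hBdd : BddAbove (Set.range fun x : {x : Fin n → Fin (d+1) → ℤ // ∑ j, x j = Fin.snoc z' t} =>
          ∏ j, f j (x.1 j) ^ p j) := ⟨C, by rintro _ ⟨x, rfl⟩; exact hC x.1⟩
      exact le_ciSup hBdd (⟨fun j => Fin.snoc (x'.1 j) (s.1 j), hmem⟩ :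
        {x : Fin n → Fin (d+1) → ℤ // ∑ j, x j = Fin.snoc z' t})
    have step4 : ∀ t : ℤ, (⨆ s : {s : Fin n → ℤ // ∑ j, s j = t}, ∏ j, g j (s.1 j) ^ p j) ≤
        ⨆ s : {s : Fin n → ℤ // ∑ j, s j = t}, D s.1 := by
      intro t
      have := splitNonempty hn t
      have hBdd : BddAbove (Set.range fun s : {s : Fin n → ℤ // ∑ j, s j = t} => D s.1) :=
        ⟨(T'.card : ℝ) * C, by rintro _ ⟨s, rfl⟩; exact hDle s.1⟩
      exact ciSup_le fun s => (hD s.1).trans (le_ciSup hBdd s)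
    have hsupGvanish : ∀ t ∉ U, (⨆ s : {s : Fin n → ℤ // ∑ j, s j = t},
        ∏ j, g j (s.1 j) ^ p j) = 0 := by
      intro t ht
      have := splitNonempty hn t
      refine ciSup_zero fun s => ?_
      by_cases h : ∀ j, s.1 j ∈ S j
      · exact absurd (Finset.mem_image.2 ⟨s.1, Fintype.mem_piFinset.2 h, s.2⟩) ht
      · push_neg at h
        obtain ⟨j, hj⟩ := h
        refine Finset.prod_eq_zero (Finset.mem_univ j) ?_
        rw [hgs j _ hj, Real.zero_rpow (hp j).ne']
    have step5 : ∑' t : ℤ, (⨆ s : {s : Fin n → ℤ // ∑ j, s j = t}, ∏ j, g j (s.1 j) ^ p j)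
        = ∑ t ∈ U, ⨆ s : {s : Fin n → ℤ // ∑ j, s j = t}, ∏ j, g j (s.1 j) ^ p j :=
      tsum_eq_sum fun t ht => hsupGvanish t ht
    have step6 := h1 g hg0 hgs
    -- identify RHS
    have hRHS : ∀ j, ∑ x ∈ Fintype.piFinset (fun _ : Fin (d+1) => S j), f j x
        = ∑ t ∈ S j, g j t := by
      intro j
      rw [hgdef]
      simp only
      rw [← Finset.sum_product']
      refine (Finset.sum_nbij' (fun pr : ℤ × (Fin d → ℤ) => (Fin.snoc pr.2 pr.1 : Fin (d+1) → ℤ))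
        (fun x => (x (Fin.last d), Fin.init x)) ?_ ?_ ?_ ?_ ?_).symm
      · intro pr hpr
        obtain ⟨h1', h2'⟩ := Finset.mem_product.1 hpr
        exact (snoc_mem_piFinset pr.2 pr.1 (S j)).2 ⟨h2', h1'⟩
      · intro x hx
        refine Finset.mem_product.2 ⟨Fintype.mem_piFinset.1 hx (Fin.last d), ?_⟩
        refine Fintype.mem_piFinset.2 fun i => ?_
        simpa [Fin.init] using Fintype.mem_piFinset.1 hx i.castSucc
      · intro pr _
        simp [Fin.snoc_last, Fin.init_snoc]
      · intro x _
        simp [Fin.snoc_init_self]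
      · intro pr _
        rfl
    calc ∏ j, (∑ x ∈ Fintype.piFinset (fun _ : Fin (d+1) => S j), f j x) ^ p j
        = ∏ j, (∑ t ∈ S j, g j t) ^ p j := by
          exact Finset.prod_congr rfl fun j _ => by rw [hRHS j]
      _ ≤ ∑' t : ℤ, ⨆ s : {s : Fin n → ℤ // ∑ j, s j = t}, ∏ j, g j (s.1 j) ^ p j := step6
      _ = ∑ t ∈ U, ⨆ s : {s : Fin n → ℤ // ∑ j, s j = t}, ∏ j, g j (s.1 j) ^ p j := step5
      _ ≤ ∑ t ∈ U, ⨆ s : {s : Fin n → ℤ // ∑ j, s j = t}, D s.1 :=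
          Finset.sum_le_sum fun t _ => step4 t
      _ ≤ ∑ t ∈ U, ∑ z' ∈ T', G (Fin.snoc z' t) := Finset.sum_le_sum fun t _ => step3 t
      _ = ∑ z ∈ Tbig, G z := step2.symm
      _ = ∑' z : Fin (d+1) → ℤ, G z := step1.symm

theorem stmt7 (n : ℕ) (hn : 1 ≤ n) (p : Fin n → ℝ) (hp : ∀ j, 0 < p j)
    (S : Fin n → Finset ℤ) (hS : ∀ j, (S j).Nonempty)
    (h1 : ∀ f : Fin n → ℤ → ℝ, (∀ j x, 0 ≤ f j x) → (∀ j, ∀ x ∉ S j, f j x = 0) →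
      ∑' z : ℤ, ⨆ x : {x : Fin n → ℤ // ∑ j, x j = z}, ∏ j, (f j (x.1 j)) ^ (p j)
        ≥ ∏ j, (∑ x ∈ S j, f j x) ^ (p j))
    (d : ℕ) (hd : 1 ≤ d) (f : Fin n → (Fin d → ℤ) → ℝ)
    (hf0 : ∀ j x, 0 ≤ f j x)
    (hfs : ∀ j, ∀ x : Fin d → ℤ, x ∉ Fintype.piFinset (fun _ => S j) → f j x = 0) :
    ∑' z : Fin d → ℤ,
        ⨆ x : {x : Fin n → Fin d → ℤ // ∑ j, x j = z}, ∏ j, (f j (x.1 j)) ^ (p j)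
      ≥ ∏ j, (∑ x ∈ Fintype.piFinset (fun _ => S j), f j x) ^ (p j) :=
  key n hn p hp S hS h1 d f hf0 hfs
end

section
/- For every integer n ≥ 2, the function g_n(w) = (1 + w + ⋯ + w^{n-1})^{1/(n-1)} / (1 + w + ⋯ + wⁿ)^{1/n} on (0,∞) satisfies g_n(1/w) = g_n(w), is increasing on (0,1], and decreasing on [1,∞). -/
open Finset Real Filter

private lemma amgm_pair {c x y : ℝ} (hx : 0 < x) (h : x * y = c ^ 2) :
    2 * c ≤ x + y := by nlinarith [sq_nonneg (x - c)]

private lemma sq_sum_ge (k : ℕ) {w : ℝ} (hw : 0 < w) :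
    ((k : ℝ) + 1) ^ 2 * w ^ k ≤ (∑ i ∈ range (k + 1), w ^ i) ^ 2 := by
  have hre : (∑ i ∈ range (k + 1), w ^ i) = ∑ i ∈ range (k + 1), w ^ (k - i) := by
    rw [← Finset.sum_range_reflect (fun i => w ^ i) (k + 1)]
    simp
  have key : ∀ i ∈ range (k+1), ∀ j ∈ range (k+1),
      2 * w ^ k ≤ w ^ i * w ^ (k - j) + (w ^ j * w ^ (k - i)) := by
    intro i hi j hj
    simp only [mem_range] at hi hj
    apply amgm_pair (by positivity)
    rw [← pow_add, ← pow_add, ← pow_add, ← pow_mul]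
    congr 1
    omega
  have hcomm : (∑ i ∈ range (k+1), ∑ j ∈ range (k+1), w ^ j * w ^ (k - i))
      = ∑ i ∈ range (k+1), ∑ j ∈ range (k+1), w ^ i * w ^ (k - j) := Finset.sum_comm
  have hle := Finset.sum_le_sum (fun i hi => Finset.sum_le_sum (key i hi))
  simp only [Finset.sum_add_distrib] at hle
  rw [hcomm] at hle
  have hconst : (∑ _i ∈ range (k+1), ∑ _j ∈ range (k+1), (2 * w ^ k))
      = 2 * (((k:ℝ)+1)^2 * w ^ k) := by
    simp [Finset.sum_const, card_range]
    ring
  rw [hconst] at hle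
  have hmul : (∑ i ∈ range (k+1), w ^ i) ^ 2
      = ∑ i ∈ range (k+1), ∑ j ∈ range (k+1), w ^ i * w ^ (k - j) := by
    rw [sq]
    nth_rewrite 2 [hre]
    exact Finset.sum_mul_sum _ _ _ _
  rw [hmul]
  linarith

private lemma key_ineq (k : ℕ) {w : ℝ} (hw : 0 < w) :
    ((k:ℝ)+1)^2 * w^(k+1) * (1-w)^2 ≤ w * (1 - w^(k+1))^2 := by
  have hg : 1 - w^(k+1) = (1-w) * ∑ i ∈ range (k+1), w^i := by
    linear_combination geom_sum_mul w (k+1)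
  have h := sq_sum_ge k hw
  have h2 : w * (((k:ℝ)+1)^2 * w^k) ≤ w * (∑ i ∈ range (k+1), w ^ i)^2 :=
    mul_le_mul_of_nonneg_left h hw.le
  rw [hg, mul_pow, pow_succ w k]
  nlinarith [sq_nonneg (1 - w), h2]

theorem stmt9 (n : ℕ) (hn : 2 ≤ n) (g : ℝ → ℝ)
    (hg : ∀ w : ℝ, g w =
      (∑ i ∈ Finset.range n, w ^ i) ^ ((1 : ℝ) / ((n : ℝ) - 1)) /
        (∑ i ∈ Finset.range (n + 1), w ^ i) ^ ((1 : ℝ) / (n : ℝ))) :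
    (∀ w : ℝ, 0 < w → g (1 / w) = g w) ∧
      MonotoneOn g (Set.Ioc (0 : ℝ) 1) ∧ AntitoneOn g (Set.Ici (1 : ℝ)) := by
  obtain ⟨m, rfl⟩ : ∃ m, n = m + 2 := ⟨n - 2, by omega⟩
  clear hn
  set A : ℝ → ℝ := fun w => ∑ i ∈ range (m + 2), w ^ i with hAdef
  set B : ℝ → ℝ := fun w => ∑ i ∈ range (m + 3), w ^ i with hBdef
  set p : ℝ := 1 / ((m : ℝ) + 1) with hpdef
  set q : ℝ := 1 / ((m : ℝ) + 2) with hqdef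
  have hg' : ∀ w : ℝ, g w = A w ^ p / B w ^ q := by
    intro w
    rw [hg w]
    simp only [hAdef, hBdef, hpdef, hqdef]
    push_cast
    rw [show (m:ℝ) + 2 - 1 = (m:ℝ) + 1 from by ring, show m + 2 + 1 = m + 3 from by omega]
  have hApos : ∀ w : ℝ, 0 < w → 0 < A w := fun w hw =>
    Finset.sum_pos (fun i _ => pow_pos hw i) ⟨0, by simp⟩
  have hBpos : ∀ w : ℝ, 0 < w → 0 < B w := fun w hw =>
    Finset.sum_pos (fun i _ => pow_pos hw i) ⟨0, by simp⟩
  -- symmetry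
  have hsymm : ∀ w : ℝ, 0 < w → g (1 / w) = g w := by
    intro w hw
    have hwne : w ≠ 0 := hw.ne'
    have hrefl : ∀ N : ℕ, (∑ i ∈ range (N+1), (1/w) ^ i)
        = (1/w)^N * ∑ i ∈ range (N+1), w ^ i := by
      intro N
      rw [← Finset.sum_range_reflect (fun i => (1/w) ^ i) (N + 1), Finset.mul_sum]
      apply Finset.sum_congr rfl
      intro i hi
      simp only [mem_range] at hi
      have hsplit : (1/w : ℝ)^N = (1/w)^(N - i) * (1/w)^i := by
        rw [← pow_add]
        congr 1
        omega
      simp only [Nat.add_sub_cancel]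
      rw [hsplit, mul_assoc, ← mul_pow]
      simp [hwne]
    rw [hg' w, hg' (1/w)]
    have hA1 : A (1/w) = (1/w)^(m+1) * A w := hrefl (m+1)
    have hB1 : B (1/w) = (1/w)^(m+2) * B w := hrefl (m+2)
    rw [hA1, hB1, Real.mul_rpow (by positivity) (hApos w hw).le,
      Real.mul_rpow (by positivity) (hBpos w hw).le]
    have e1 : ((1/w : ℝ)^(m+1)) ^ p = 1/w := by
      rw [← Real.rpow_natCast (1/w) (m+1), ← Real.rpow_mul (by positivity)]
      rw [hpdef]
      push_cast
      rw [mul_one_div, div_self (by positivity : (m:ℝ) + 1 ≠ 0), Real.rpow_one]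
    have e2 : ((1/w : ℝ)^(m+2)) ^ q = 1/w := by
      rw [← Real.rpow_natCast (1/w) (m+2), ← Real.rpow_mul (by positivity)]
      rw [hqdef]
      push_cast
      rw [mul_one_div, div_self (by positivity : (m:ℝ) + 2 ≠ 0), Real.rpow_one]
    rw [e1, e2, mul_div_mul_left _ _ (by positivity : (1/w : ℝ) ≠ 0)]
  -- derivative facts
  have hderiv : ∀ x ∈ Set.Ioo (0:ℝ) 1, ∃ d : ℝ,
      HasDerivAt (fun w => A w ^ p / B w ^ q) d x ∧ 0 ≤ d := by
    intro x hx
    obtain ⟨hx0, hx1⟩ := hx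
    have hxne : x ≠ 1 := ne_of_lt hx1
    have hxne0 : x ≠ 0 := hx0.ne'
    have hsub : x - 1 ≠ 0 := sub_ne_zero.mpr hxne
    have hev : ∀ᶠ w in nhds x, w ≠ (1:ℝ) := eventually_ne_nhds hxne
    -- closed form derivatives
    have hApow : HasDerivAt (fun w : ℝ => w ^ (m+2) - 1) (((m:ℝ)+2) * x^(m+1)) x := by
      have := (hasDerivAt_pow (m+2) x).sub_const 1
      norm_num at this ⊢
      convert this using 2
    have hBpow : HasDerivAt (fun w : ℝ => w ^ (m+3) - 1) (((m:ℝ)+3) * x^(m+2)) x := by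
      have := (hasDerivAt_pow (m+3) x).sub_const 1
      norm_num at this ⊢
      convert this using 2
    have hden : HasDerivAt (fun w : ℝ => w - 1) 1 x := (hasDerivAt_id x).sub_const 1
    set A' : ℝ := (((m:ℝ)+2) * x^(m+1) * (x-1) - (x^(m+2)-1) * 1) / (x-1)^2 with hA'def
    set B' : ℝ := (((m:ℝ)+3) * x^(m+2) * (x-1) - (x^(m+3)-1) * 1) / (x-1)^2 with hB'def
    have hAc : HasDerivAt (fun w : ℝ => (w^(m+2)-1)/(w-1)) A' x := hApow.div hden hsub
    have hBc : HasDerivAt (fun w : ℝ => (w^(m+3)-1)/(w-1)) B' x := hBpow.div hden hsub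
    have hAeq : (fun w : ℝ => A w) =ᶠ[nhds x] (fun w : ℝ => (w^(m+2)-1)/(w-1)) :=
      hev.mono fun w hw => by simp only [hAdef]; rw [geom_sum_eq hw]
    have hBeq : (fun w : ℝ => B w) =ᶠ[nhds x] (fun w : ℝ => (w^(m+3)-1)/(w-1)) :=
      hev.mono fun w hw => by simp only [hBdef]; rw [geom_sum_eq hw]
    have hAd : HasDerivAt A A' x := hAc.congr_of_eventuallyEq hAeq
    have hBd : HasDerivAt B B' x := hBc.congr_of_eventuallyEq hBeq
    have hAx : 0 < A x := hApos x hx0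
    have hBx : 0 < B x := hBpos x hx0
    have hu : HasDerivAt (fun w => A w ^ p) (A' * p * A x ^ (p-1)) x :=
      hAd.rpow_const (Or.inl hAx.ne')
    have hv : HasDerivAt (fun w => B w ^ q) (B' * q * B x ^ (q-1)) x :=
      hBd.rpow_const (Or.inl hBx.ne')
    have hvne : B x ^ q ≠ 0 := (Real.rpow_pos_of_pos hBx q).ne'
    refine ⟨_, hu.div hv hvne, ?_⟩
    -- nonnegativity of the derivative
    have hkey : 0 ≤ p * A' * B x - q * B' * A x := by
      have hAval : A x = (x^(m+2)-1)/(x-1) := geom_sum_eq hxne _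
      have hBval : B x = (x^(m+3)-1)/(x-1) := geom_sum_eq hxne _
      have hiden : p * A' * B x - q * B' * A x
          = (x * (1 - x^(m+2))^2 - ((m:ℝ)+2)^2 * x^(m+2) * (1-x)^2)
            / (((m:ℝ)+1) * ((m:ℝ)+2) * (x * (1-x)^3)) := by
        rw [hAval, hBval, hA'def, hB'def, hpdef, hqdef]
        have h1 : (m:ℝ)+1 ≠ 0 := by positivity
        have h2 : (m:ℝ)+2 ≠ 0 := by positivity
        have h3 : (1:ℝ) - x ≠ 0 := ne_of_gt (by linarith : (0:ℝ) < 1 - x)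
        field_simp
        ring
      rw [hiden]
      apply div_nonneg
      · have := key_ineq (m+1) hx0
        push_cast at this
        linarith [this]
      · have : (0:ℝ) < 1 - x := by linarith
        positivity
    have hAxp : A x ^ p = A x ^ (p-1) * A x := by
      conv_lhs => rw [show p = (p-1) + 1 by ring]
      rw [Real.rpow_add hAx, Real.rpow_one]
    have hBxq : B x ^ q = B x ^ (q-1) * B x := by
      conv_lhs => rw [show q = (q-1) + 1 by ring]
      rw [Real.rpow_add hBx, Real.rpow_one]
    have hnum : A' * p * A x ^ (p-1) * B x ^ q - A x ^ p * (B' * q * B x ^ (q-1))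
        = A x ^ (p-1) * B x ^ (q-1) * (p * A' * B x - q * B' * A x) := by
      rw [hAxp, hBxq]; ring
    rw [hnum]
    have hp1 : 0 < A x ^ (p-1) := Real.rpow_pos_of_pos hAx _
    have hq1 : 0 < B x ^ (q-1) := Real.rpow_pos_of_pos hBx _
    positivity
  -- monotone
  have hmono : MonotoneOn g (Set.Ioc (0:ℝ) 1) := by
    have hgfun : g = fun w => A w ^ p / B w ^ q := funext hg'
    rw [hgfun]
    apply monotoneOn_of_deriv_nonneg (convex_Ioc 0 1)
    · apply ContinuousOn.div
      · apply ContinuousOn.rpow_const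
        · exact (continuous_finset_sum _ fun i _ => continuous_pow i).continuousOn
        · intro x hx
          exact Or.inr (by positivity)
      · apply ContinuousOn.rpow_const
        · exact (continuous_finset_sum _ fun i _ => continuous_pow i).continuousOn
        · intro x hx
          exact Or.inr (by positivity)
      · intro x hx
        exact (Real.rpow_pos_of_pos (hBpos x hx.1) q).ne'
    · rw [interior_Ioc]
      intro x hx
      obtain ⟨d, hd, _⟩ := hderiv x hx
      exact hd.differentiableAt.differentiableWithinAt
    · rw [interior_Ioc]
      intro x hx
      obtain ⟨d, hd, hd0⟩ := hderiv x hx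
      rw [hd.deriv]
      exact hd0
  refine ⟨hsymm, hmono, ?_⟩
  intro a ha b hb hab
  have ha0 : (0:ℝ) < a := lt_of_lt_of_le one_pos ha
  have hb0 : (0:ℝ) < b := lt_of_lt_of_le one_pos hb
  rw [← hsymm a ha0, ← hsymm b hb0]
  apply hmono
  · exact ⟨by positivity, by rw [div_le_one hb0]; exact hb⟩
  · exact ⟨by positivity, by rw [div_le_one ha0]; exact ha⟩
  · exact one_div_le_one_div_of_le ha0 hab
end

section
/- Let p = log 5 / (2 log 3). For all x ≥ 0, one has 1 + xᵖ + x^{2p} + x^{3p} + x^{4p} ≥ (1 + x + x²)^{2p}. -/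
/-!
Put `r = 2p = log 5 / log 3` (so `3 ^ r = 5`), `κ = 8 / r ∈ (5, 6)` and `x = t ^ κ`; the left side
becomes `L = 1 + t⁴ + ⋯ + t¹⁶`. With `A = 1 + t⁵ + t¹⁰` and `B = 1 + t⁶ + t¹²`, log-convexity of
power sums in the exponent (Hölder) gives `1 + x + x² ≤ A ^ (6 - κ) * B ^ (κ - 5)`, whose `r`-th
power is `W ^ r * B⁸ / A⁸` with `W = A⁶ / B⁵`. Comparing `ℓ⁵` with `ℓ⁶` norms gives `1 ≤ W ≤ 3`, and
concavity of `w ↦ w ^ (2 - r)` between `1` and `3`, where `3 ^ (2 - r) = 9 / 5`, gives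
`W ^ r ≤ 5 W² / (2 W + 3)`. What remains is a polynomial inequality in `t`.
-/

open Real Finset

theorem sum_rpow_mul_add_mul_le {ι : Type*} (s : Finset ι) {z : ι → ℝ} (hz : ∀ i ∈ s, 0 ≤ z i)
    {a b u v : ℝ} (ha : 0 ≤ a) (hb : 0 ≤ b) (hu : 0 < u) (hv : 0 < v) (huv : u + v = 1) :
    ∑ i ∈ s, z i ^ (u * a + v * b) ≤ (∑ i ∈ s, z i ^ a) ^ u * (∑ i ∈ s, z i ^ b) ^ v := by
  have rescale : ∀ {c d : ℝ}, 0 < c →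
      (∑ i ∈ s, z i ^ d) ^ c = (∑ i ∈ s, (z i ^ (c * d)) ^ (1 / c)) ^ (1 / (1 / c)) := by
    intro c d hc
    rw [one_div_one_div]
    congr 1
    refine sum_congr rfl fun i hi => ?_
    rw [← rpow_mul (hz i hi)]
    field_simp
  have h := inner_le_Lp_mul_Lq_of_nonneg s (holderConjugate_one_div hu hv huv)
    (f := fun i => z i ^ (u * a)) (g := fun i => z i ^ (v * b))
    (fun i hi => rpow_nonneg (hz i hi) _) (fun i hi => rpow_nonneg (hz i hi) _)
  convert h using 2 with i hi
  · exact rpow_add_of_nonneg (hz i hi) (by positivity) (by positivity)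
  · exact rescale hu
  · exact rescale hv

theorem sum_pow_succ_pow_le {ι : Type*} (s : Finset ι) (hs : s.Nonempty) {f : ι → ℝ}
    (hf : ∀ i ∈ s, 0 ≤ f i) (n : ℕ) :
    (∑ i ∈ s, f i ^ (n + 1)) ^ n ≤ (∑ i ∈ s, f i ^ n) ^ (n + 1) := by
  obtain ⟨j, hj, hjmax⟩ := exists_max_image s f hs
  have hsum_succ : ∑ i ∈ s, f i ^ (n + 1) ≤ f j * ∑ i ∈ s, f i ^ n := by
    rw [mul_sum]
    gcongr with i hi
    rw [pow_succ']
    exact mul_le_mul_of_nonneg_right (hjmax i hi) (pow_nonneg (hf i hi) n)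
  have hmax_pow : f j ^ n ≤ ∑ i ∈ s, f i ^ n :=
    single_le_sum (fun i hi => pow_nonneg (hf i hi) n) hj
  calc (∑ i ∈ s, f i ^ (n + 1)) ^ n ≤ (f j * ∑ i ∈ s, f i ^ n) ^ n := by
        gcongr
        exact sum_nonneg fun i hi => pow_nonneg (hf i hi) _
    _ = f j ^ n * (∑ i ∈ s, f i ^ n) ^ n := mul_pow _ _ _
    _ ≤ (∑ i ∈ s, f i ^ n) * (∑ i ∈ s, f i ^ n) ^ n := by
        gcongr
        exact pow_nonneg (sum_nonneg fun i hi => pow_nonneg (hf i hi) _) _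
    _ = (∑ i ∈ s, f i ^ n) ^ (n + 1) := by ring

lemma sum_range_three_pow_rpow {t : ℝ} (ht : 0 ≤ t) (k : ℝ) :
    ∑ i ∈ range 3, (t ^ i) ^ k = 1 + t ^ k + (t ^ k) ^ 2 := by
  simp [sum_range_succ, ← rpow_pow_comm ht]

lemma pow_five_le_pow_six {t : ℝ} (ht : 0 ≤ t) :
    (1 + t ^ 6 + t ^ 12) ^ 5 ≤ (1 + t ^ 5 + t ^ 10) ^ 6 := by
  have h := sum_pow_succ_pow_le (range 3) (by simp) (f := fun i => t ^ i)
    (fun i _ => pow_nonneg ht i) 5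
  simpa [sum_range_succ, ← pow_mul] using h

lemma pow_six_le_three_mul_pow_five {t : ℝ} (ht : 0 ≤ t) :
    (1 + t ^ 5 + t ^ 10) ^ 6 ≤ 3 * (1 + t ^ 6 + t ^ 12) ^ 5 := by
  have h := sum_rpow_mul_add_mul_le (range 3) (z := fun i => t ^ i) (a := 0) (b := 6)
    (u := 1 / 6) (v := 5 / 6) (fun i _ => pow_nonneg ht i) le_rfl (by norm_num) (by norm_num)
    (by norm_num) (by norm_num)
  rw [show (1 / 6 : ℝ) * 0 + 5 / 6 * 6 = 5 by norm_num] at h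
  simp only [sum_range_three_pow_rpow ht] at h
  norm_num [← pow_mul] at h
  calc (1 + t ^ 5 + t ^ 10) ^ 6 ≤ (3 ^ (1 / 6 : ℝ) * (1 + t ^ 6 + t ^ 12) ^ (5 / 6 : ℝ)) ^ 6 := by
        gcongr
    _ = 3 * (1 + t ^ 6 + t ^ 12) ^ 5 := by
        rw [mul_pow, ← rpow_mul_natCast (by norm_num), ← rpow_mul_natCast (by positivity)]
        norm_num

lemma one_add_rpow_add_sq_le {κ t : ℝ} (ht : 0 ≤ t) (h5 : 5 < κ) (h6 : κ < 6) :
    1 + t ^ κ + (t ^ κ) ^ 2 ≤ (1 + t ^ 5 + t ^ 10) ^ (6 - κ) * (1 + t ^ 6 + t ^ 12) ^ (κ - 5) := by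
  have h := sum_rpow_mul_add_mul_le (range 3) (z := fun i => t ^ i) (a := 5) (b := 6)
    (u := 6 - κ) (v := κ - 5) (fun i _ => pow_nonneg ht i) (by norm_num) (by norm_num)
    (by linarith) (by linarith) (by ring)
  rw [show (6 - κ) * 5 + (κ - 5) * 6 = κ by ring] at h
  simp only [sum_range_three_pow_rpow ht] at h
  simpa only [rpow_ofNat, ← pow_mul] using h

lemma rpow_mul_two_mul_add_three_le {r w : ℝ} (h3 : (3 : ℝ) ^ r = 5) (hr1 : 1 < r) (hr2 : r < 2)
    (hw1 : 1 ≤ w) (hw3 : w ≤ 3) : w ^ r * (2 * w + 3) ≤ 5 * w ^ 2 := by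
  have hw0 : 0 < w := by linarith
  have h3' : (3 : ℝ) ^ (2 - r) = 9 / 5 := by
    rw [rpow_sub (by norm_num), h3]
    norm_num
  have hchord : (2 * w + 3) / 5 ≤ w ^ (2 - r) := by
    have hconc := (strictConcaveOn_rpow (p := 2 - r) (by linarith) (by linarith)).concaveOn
    have h := hconc.2 (Set.mem_Ici.2 zero_le_one) (Set.mem_Ici.2 (by norm_num : (0 : ℝ) ≤ 3))
      (show 0 ≤ (3 - w) / 2 by linarith) (show 0 ≤ (w - 1) / 2 by linarith) (by ring)
    simp only [smul_eq_mul, one_rpow, h3'] at h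
    calc (2 * w + 3) / 5 = (3 - w) / 2 * 1 + (w - 1) / 2 * (9 / 5) := by ring
      _ ≤ ((3 - w) / 2 * 1 + (w - 1) / 2 * 3) ^ (2 - r) := h
      _ = w ^ (2 - r) := by ring_nf
  have hsplit : w ^ r * w ^ (2 - r) = w ^ 2 := by
    rw [← rpow_add hw0, add_sub_cancel, rpow_two]
  calc w ^ r * (2 * w + 3) ≤ w ^ r * (5 * w ^ (2 - r)) := by gcongr; linarith
    _ = 5 * w ^ 2 := by rw [← hsplit]; ring

lemma lt_and_lt_of_three_rpow_eq_five {r : ℝ} (h3 : (3 : ℝ) ^ r = 5) : 4 / 3 < r ∧ r < 8 / 5 := by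
  have hlog3 : 0 < log 3 := log_pos (by norm_num)
  have hr : r * log 3 = log 5 := by rw [← log_rpow (by norm_num), h3]
  have log_lt_of_pow_lt :
      ∀ {a b : ℝ} {m n : ℕ}, 0 < a → a ^ m < b ^ n → m * log a < n * log b := by
    intro a b m n ha h
    rw [← log_pow, ← log_pow]
    exact log_lt_log (by positivity) h
  have h81 := log_lt_of_pow_lt (m := 4) (n := 3) (a := 3) (b := 5) (by norm_num) (by norm_num)
  have h3125 := log_lt_of_pow_lt (m := 5) (n := 8) (a := 5) (b := 3) (by norm_num) (by norm_num)
  push_cast at h81 h3125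
  constructor <;> nlinarith

lemma five_mul_pow_four_mul_pow_three_le {t : ℝ} (ht : 0 ≤ t) :
    5 * (1 + t ^ 5 + t ^ 10) ^ 4 * (1 + t ^ 6 + t ^ 12) ^ 3 ≤
      (1 + t ^ 4 + t ^ 8 + t ^ 12 + t ^ 16) *
        (2 * (1 + t ^ 5 + t ^ 10) ^ 6 + 3 * (1 + t ^ 6 + t ^ 12) ^ 5) := by
  -- both sides agree to fourth order at `t = 1`; the quotient has nonnegative coefficients
  rw [← sub_nonneg]
  convert (show 0 ≤ (t - 1) ^ 4 * (
      5 * t ^ 4 + 12 * t ^ 5 + 18 * t ^ 6 + 20 * t ^ 7 + 20 * t ^ 8 + 32 * t ^ 9 + 77 * t ^ 10 +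
      116 * t ^ 11 + 130 * t ^ 12 + 112 * t ^ 13 + 112 * t ^ 14 + 200 * t ^ 15 + 346 * t ^ 16 +
      412 * t ^ 17 + 372 * t ^ 18 + 300 * t ^ 19 + 400 * t ^ 20 + 648 * t ^ 21 + 867 * t ^ 22 +
      840 * t ^ 23 + 680 * t ^ 24 + 672 * t ^ 25 + 948 * t ^ 26 + 1260 * t ^ 27 + 1370 * t ^ 28 +
      1172 * t ^ 29 + 1020 * t ^ 30 + 1128 * t ^ 31 + 1455 * t ^ 32 + 1652 * t ^ 33 +
      1595 * t ^ 34 + 1332 * t ^ 35 + 1206 * t ^ 36 + 1332 * t ^ 37 + 1595 * t ^ 38 +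
      1652 * t ^ 39 + 1455 * t ^ 40 + 1128 * t ^ 41 + 1020 * t ^ 42 + 1172 * t ^ 43 +
      1370 * t ^ 44 + 1260 * t ^ 45 + 948 * t ^ 46 + 672 * t ^ 47 + 680 * t ^ 48 + 840 * t ^ 49 +
      867 * t ^ 50 + 648 * t ^ 51 + 400 * t ^ 52 + 300 * t ^ 53 + 372 * t ^ 54 + 412 * t ^ 55 +
      346 * t ^ 56 + 200 * t ^ 57 + 112 * t ^ 58 + 112 * t ^ 59 + 130 * t ^ 60 + 116 * t ^ 61 +
      77 * t ^ 62 + 32 * t ^ 63 + 20 * t ^ 64 + 20 * t ^ 65 + 18 * t ^ 66 + 12 * t ^ 67 +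
      5 * t ^ 68)
    by positivity) using 1
  ring

theorem one_add_rpow_add_sq_rpow_le_of_three_rpow_eq_five {r t : ℝ} (h3 : (3 : ℝ) ^ r = 5)
    (ht : 0 ≤ t) :
    (1 + t ^ (8 / r) + (t ^ (8 / r)) ^ 2) ^ r ≤ 1 + t ^ 4 + t ^ 8 + t ^ 12 + t ^ 16 := by
  obtain ⟨hr1, hr2⟩ := lt_and_lt_of_three_rpow_eq_five h3
  have hr0 : 0 < r := by linarith
  set A := 1 + t ^ 5 + t ^ 10
  set B := 1 + t ^ 6 + t ^ 12
  set L := 1 + t ^ 4 + t ^ 8 + t ^ 12 + t ^ 16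
  have hA : 0 < A := by positivity
  have hB : 0 < B := by positivity
  set W := A ^ 6 / B ^ 5 with hW_def
  have hW1 : 1 ≤ W := (one_le_div (by positivity)).2 (pow_five_le_pow_six ht)
  have hW3 : W ≤ 3 := (div_le_iff₀ (by positivity)).2 (pow_six_le_three_mul_pow_five ht)
  have hholder : 1 + t ^ (8 / r) + (t ^ (8 / r)) ^ 2 ≤ A ^ (6 - 8 / r) * B ^ (8 / r - 5) :=
    one_add_rpow_add_sq_le ht (by rw [lt_div_iff₀ hr0]; linarith)
      (by rw [div_lt_iff₀ hr0]; linarith)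
  set M := (A ^ (6 - 8 / r) * B ^ (8 / r - 5)) ^ r with hM_def
  have hM : M * A ^ 8 = W ^ r * B ^ 8 := by
    rw [hM_def, mul_rpow (by positivity) (by positivity), ← rpow_mul hA.le, ← rpow_mul hB.le,
      show (6 - 8 / r) * r = 6 * r - 8 by field_simp,
      show (8 / r - 5) * r = 8 - 5 * r by field_simp,
      rpow_sub hA, rpow_sub hB, hW_def, div_rpow (by positivity) (by positivity),
      ← rpow_natCast_mul hA.le, ← rpow_natCast_mul hB.le]
    norm_num
    field_simp
  have hchord := rpow_mul_two_mul_add_three_le h3 (by linarith) (by linarith) hW1 hW3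
  have hpoly := five_mul_pow_four_mul_pow_three_le ht
  calc (1 + t ^ (8 / r) + (t ^ (8 / r)) ^ 2) ^ r ≤ M := rpow_le_rpow (by positivity) hholder hr0.le
    _ ≤ L := by
      refine le_of_mul_le_mul_right (a := A ^ 8 * (2 * W + 3)) ?_ (by positivity)
      calc M * (A ^ 8 * (2 * W + 3)) = W ^ r * (2 * W + 3) * B ^ 8 := by
            rw [← mul_assoc, hM]; ring
        _ ≤ 5 * W ^ 2 * B ^ 8 := by gcongr
        _ = 5 * A ^ 4 * B ^ 3 * (A ^ 8 / B ^ 5) := by rw [hW_def]; field_simp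
        _ ≤ L * (2 * A ^ 6 + 3 * B ^ 5) * (A ^ 8 / B ^ 5) := by gcongr
        _ = L * (A ^ 8 * (2 * W + 3)) := by rw [hW_def]; field_simp

theorem stmt14 (p : ℝ) (hp : p = Real.log 5 / (2 * Real.log 3)) (x : ℝ) (hx : 0 ≤ x) :
    1 + x ^ p + x ^ (2 * p) + x ^ (3 * p) + x ^ (4 * p) ≥ (1 + x + x ^ 2) ^ (2 * p) := by
  have h3 : (3 : ℝ) ^ (2 * p) = 5 := by
    have hlog3 : log 3 ≠ 0 := (log_pos (by norm_num)).ne'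
    rw [rpow_def_of_pos (by norm_num), hp, show log 3 * (2 * (log 5 / (2 * log 3))) = log 5 by
      field_simp, exp_log (by norm_num)]
  have hp0 : p ≠ 0 := by rw [hp]; positivity
  set t := x ^ (p / 4)
  have hxt : t ^ (8 / (2 * p)) = x := by
    rw [show 8 / (2 * p) = (p / 4)⁻¹ by field_simp; ring]
    exact rpow_rpow_inv hx (by positivity)
  have hpow : ∀ k : ℕ, x ^ (k * p) = t ^ (4 * k) := fun k => by
    rw [← rpow_natCast, ← rpow_mul hx]; congr 1; push_cast; ring
  have h := one_add_rpow_add_sq_rpow_le_of_three_rpow_eq_five h3 (rpow_nonneg hx (p / 4))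
  rw [hxt] at h
  rw [ge_iff_le, show x ^ p = t ^ 4 by simpa using hpow 1, show x ^ (2 * p) = t ^ 8 by
    simpa using hpow 2, show x ^ (3 * p) = t ^ 12 by simpa using hpow 3,
    show x ^ (4 * p) = t ^ 16 by simpa using hpow 4]
  exact h
end
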